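/- Let X be a proper, geodesically complete metric space and Γ a group acting on X properly discontinuously, cocompactly, and by isometries. Then the induced action of Γ on SX given by γ·v = γ∘v is an action by isometries of the metric d(v,w) = sup_{t∈ℝ} e^{−|t|}·d(v(t),w(t)), and this action is properly discontinuous and cocompact. -/

import Mathlib

/-!
Two geodesics diverge at most linearly, `d(v t, w t) ≤ d(v 0, w 0) + 2|t|`, so the weight
`e^{-|t|}` makes the supremum finite. Evaluation at time `0` is `1`-Lipschitz and `Γ`-equivariant,
so proper discontinuity on `SX` follows from proper discontinuity on `X`, and cocompactness
reduces to compactness of the set of geodesics `v` with `v 0` in a compact `K`. That set is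
compact for pointwise convergence (Tychonoff, `X` being proper), and on geodesics pointwise
convergence implies convergence for the weighted metric: being `1`-Lipschitz, the geodesics
converge uniformly on compact time intervals, and the linear divergence bound controls the tail.
-/

open scoped Pointwise

/-- The space of (unit-speed, bi-infinite) geodesics of `X`: isometric embeddings `ℝ → X`. -/
def GeodSpace (X : Type*) [MetricSpace X] : Type _ := {v : ℝ → X // Isometry v}

/-- The induced action `γ · v = γ ∘ v` of `Γ` on the space of geodesics. -/
def actGeod {X : Type*} [MetricSpace X] {Γ : Type*} [Group Γ] [MulAction Γ X]
    [IsIsometricSMul Γ X] (γ : Γ) (v : GeodSpace X) : GeodSpace X :=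
  ⟨fun t => γ • v.1 t, (isometry_smul X γ).comp v.2⟩

open Metric Filter Topology Real

section IsometryFamilies

variable {α X : Type*} [PseudoMetricSpace α] [PseudoMetricSpace X]

lemma Isometry.dist_apply_le {f g : α → X} (hf : Isometry f) (hg : Isometry g) (s t : α) :
    dist (f t) (g t) ≤ dist (f s) (g s) + 2 * dist t s := by
  have := dist_triangle4 (f t) (f s) (g s) (g t)
  rw [hf.dist_eq, hg.dist_eq, dist_comm s t] at this
  linarith

lemma isClosed_setOf_isometry : IsClosed {f : α → X | Isometry f} := by
  simp only [isometry_iff_dist_eq, Set.ofPred_forall]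
  exact isClosed_iInter fun s => isClosed_iInter fun t =>
    isClosed_eq ((continuous_apply s).dist (continuous_apply t)) continuous_const

lemma isCompact_setOf_isometry_apply_mem [ProperSpace X] [T2Space X] (a : α) {K : Set X}
    (hK : IsCompact K) : IsCompact {f : α → X | Isometry f ∧ f a ∈ K} := by
  refine (isCompact_univ_pi fun t => hK.cthickening (r := dist t a)).of_isClosed_subset
    (isClosed_setOf_isometry.inter (hK.isClosed.preimage (continuous_apply a))) ?_
  rintro f ⟨hf, hfa⟩ t -
  exact mem_cthickening_of_dist_le _ _ _ _ hfa (hf.dist_eq t a).le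

lemma eventually_forall_dist_lt_of_isCompact {K : Set α} (hK : IsCompact K)
    (f : {f : α → X // Isometry f}) {ε : ℝ} (hε : 0 < ε) :
    ∀ᶠ g in 𝓝 f, ∀ t ∈ K, dist (g.1 t) (f.1 t) < ε := by
  refine hK.eventually_forall_of_forall_eventually fun s _ => ?_
  have hcont : Continuous fun z : {f : α → X // Isometry f} × α =>
      dist (z.1.1 s) (f.1 s) + 2 * dist z.2 s :=
    (((continuous_apply s).comp continuous_subtype_val).comp continuous_fst).dist
      continuous_const |>.add (continuous_const.mul (continuous_snd.dist continuous_const))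
  have hzero : dist (f.1 s) (f.1 s) + 2 * dist s s < ε := by simpa using hε
  filter_upwards [hcont.continuousAt.eventually (eventually_lt_nhds hzero)] with z hz
  exact (z.1.2.dist_apply_le f.2 s z.2).trans_lt hz

end IsometryFamilies

lemma exists_forall_exp_neg_mul_lt {ε : ℝ} (hε : 0 < ε) :
    ∃ T, ∀ s ≥ T, exp (-s) * (1 + 2 * s) < ε := by
  have htail : Tendsto (fun s : ℝ => exp (-s) * (1 + 2 * s)) atTop (𝓝 0) := by
    have := tendsto_exp_neg_atTop_nhds_zero.add
      ((tendsto_pow_mul_exp_neg_atTop_nhds_zero 1).const_mul 2)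
    simp only [mul_zero, add_zero, pow_one] at this
    exact this.congr fun s => by ring
  exact eventually_atTop.1 (htail.eventually (eventually_lt_nhds hε))

namespace GeodSpace

variable {X : Type*} [MetricSpace X]

def mk (f : ℝ → X) (hf : Isometry f) : GeodSpace X := ⟨f, hf⟩

lemma weight_mul_dist_le (v w : GeodSpace X) (t : ℝ) :
    exp (-|t|) * dist (v.1 t) (w.1 t) ≤ exp (-|t|) * (dist (v.1 0) (w.1 0) + 2 * |t|) :=
  mul_le_mul_of_nonneg_left (by simpa using v.2.dist_apply_le w.2 0 t) (exp_pos _).le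

lemma bddAbove_range_weight_mul_dist (v w : GeodSpace X) :
    BddAbove (Set.range fun t : ℝ => exp (-|t|) * dist (v.1 t) (w.1 t)) := by
  refine ⟨dist (v.1 0) (w.1 0) + 2, Set.forall_mem_range.2 fun t =>
    (weight_mul_dist_le v w t).trans ?_⟩
  have hexp : exp (-|t|) ≤ 1 := exp_le_one_iff.2 (neg_nonpos.2 (abs_nonneg t))
  have habs : |t| * exp (-|t|) ≤ 1 := by
    rw [exp_neg, mul_inv_le_iff₀ (exp_pos _), one_mul]
    linarith [add_one_le_exp |t|]
  nlinarith [dist_nonneg (x := v.1 0) (y := w.1 0)]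

noncomputable instance : MetricSpace (GeodSpace X) where
  dist v w := ⨆ t : ℝ, exp (-|t|) * dist (v.1 t) (w.1 t)
  dist_self v := by simp
  dist_comm v w := by simp only [dist_comm]
  dist_triangle u v w := ciSup_le fun t => by
    have := dist_triangle (u.1 t) (v.1 t) (w.1 t)
    have := le_ciSup (bddAbove_range_weight_mul_dist u v) t
    have := le_ciSup (bddAbove_range_weight_mul_dist v w) t
    nlinarith [exp_pos (-|t|)]
  eq_of_dist_eq_zero {v w} h := Subtype.ext <| funext fun t => by
    have hle := le_ciSup (bddAbove_range_weight_mul_dist v w) t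
    rw [h] at hle
    exact dist_le_zero.1 (nonpos_of_mul_nonpos_right hle (exp_pos _))

lemma dist_eq_iSup (v w : GeodSpace X) :
    dist v w = ⨆ t : ℝ, exp (-|t|) * dist (v.1 t) (w.1 t) := rfl

lemma weight_mul_dist_le_dist (v w : GeodSpace X) (t : ℝ) :
    exp (-|t|) * dist (v.1 t) (w.1 t) ≤ dist v w :=
  le_ciSup (bddAbove_range_weight_mul_dist v w) t

lemma dist_le_of_forall_weight_mul_dist_le {v w : GeodSpace X} {C : ℝ}
    (h : ∀ t, exp (-|t|) * dist (v.1 t) (w.1 t) ≤ C) : dist v w ≤ C :=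
  ciSup_le h

lemma lipschitzWith_apply_zero : LipschitzWith 1 fun v : GeodSpace X => v.1 0 :=
  LipschitzWith.of_dist_le_mul fun v w => by simpa using weight_mul_dist_le_dist v w 0

lemma dist_actGeod {Γ : Type*} [Group Γ] [MulAction Γ X] [IsIsometricSMul Γ X] (γ : Γ)
    (v w : GeodSpace X) : dist (actGeod γ v) (actGeod γ w) = dist v w := by
  rw [dist_eq_iSup, dist_eq_iSup]
  simp only [actGeod, dist_smul]

theorem continuous_mk :
    Continuous fun f : {f : ℝ → X // Isometry f} => mk f.1 f.2 := by
  refine continuous_iff_continuousAt.2 fun f => ?_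
  rw [ContinuousAt, Metric.tendsto_nhds]
  intro ε hε
  obtain ⟨T, hT⟩ := exists_forall_exp_neg_mul_lt (half_pos hε)
  have hzero : ∀ᶠ g in 𝓝 f, dist (g.1 0) (f.1 0) < 1 :=
    Metric.tendsto_nhds.1 (((continuous_apply 0).comp continuous_subtype_val).tendsto f) 1
      one_pos
  filter_upwards [eventually_forall_dist_lt_of_isCompact isCompact_Icc f (half_pos hε), hzero]
    with g hnear h0
  refine (dist_le_of_forall_weight_mul_dist_le fun t => ?_).trans_lt (half_lt_self hε)
  by_cases ht : |t| ≤ T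
  · exact (mul_le_of_le_one_left dist_nonneg (exp_le_one_iff.2 (neg_nonpos.2 (abs_nonneg t))))
      |>.trans (hnear t (abs_le.1 ht)).le
  · calc exp (-|t|) * dist (g.1 t) (f.1 t)
        ≤ exp (-|t|) * (dist (g.1 0) (f.1 0) + 2 * |t|) := weight_mul_dist_le ⟨_, g.2⟩ ⟨_, f.2⟩ t
      _ ≤ exp (-|t|) * (1 + 2 * |t|) := by gcongr
      _ ≤ ε / 2 := (hT _ (le_of_not_ge ht)).le

theorem isCompact_setOf_apply_zero_mem [ProperSpace X] {K : Set X} (hK : IsCompact K) :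
    IsCompact {v : GeodSpace X | v.1 0 ∈ K} := by
  have hS := isClosed_setOf_isometry.isClosedEmbedding_subtypeVal.isCompact_preimage
    (isCompact_setOf_isometry_apply_mem (0 : ℝ) hK)
  have hslice : {v : GeodSpace X | v.1 0 ∈ K} = (fun f : {f : ℝ → X // Isometry f} =>
      mk f.1 f.2) '' (Subtype.val ⁻¹' {f | Isometry f ∧ f 0 ∈ K}) :=
    Set.ext fun v => ⟨fun hv => ⟨⟨v.1, v.2⟩, ⟨v.2, hv⟩, rfl⟩, by rintro ⟨f, hf, rfl⟩; exact hf.2⟩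
  rw [hslice]
  exact hS.image continuous_mk

end GeodSpace

open GeodSpace in
theorem stmt8_general {X : Type*} [MetricSpace X] [ProperSpace X]
    {Γ : Type*} [Group Γ] [MulAction Γ X] [IsIsometricSMul Γ X]
    (hpd : ∀ K : Set X, IsCompact K → {γ : Γ | (K ∩ γ • K).Nonempty}.Finite)
    (hcc : ∃ K : Set X, IsCompact K ∧ ∀ x : X, ∃ γ : Γ, γ • x ∈ K) :
    ∃ m : MetricSpace (GeodSpace X),
      (∀ v w : GeodSpace X,
        @dist _ m.toPseudoMetricSpace.toDist v w
          = ⨆ t : ℝ, Real.exp (-|t|) * dist (v.1 t) (w.1 t)) ∧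
      (∀ (γ : Γ) (v w : GeodSpace X),
        @dist _ m.toPseudoMetricSpace.toDist (actGeod γ v) (actGeod γ w)
          = @dist _ m.toPseudoMetricSpace.toDist v w) ∧
      (∀ K : Set (GeodSpace X), @IsCompact _ m.toUniformSpace.toTopologicalSpace K →
        {γ : Γ | (K ∩ (actGeod γ '' K)).Nonempty}.Finite) ∧
      (∃ K : Set (GeodSpace X), @IsCompact _ m.toUniformSpace.toTopologicalSpace K ∧
        ∀ v : GeodSpace X, ∃ γ : Γ, actGeod γ v ∈ K) := by
  refine ⟨inferInstance, dist_eq_iSup, dist_actGeod, fun K hK => ?_, ?_⟩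
  · refine (hpd _ (hK.image lipschitzWith_apply_zero.continuous)).subset ?_
    rintro γ ⟨_, hv, w, hw, rfl⟩
    exact ⟨γ • w.1 0, ⟨_, hv, rfl⟩, Set.smul_mem_smul_set ⟨w, hw, rfl⟩⟩
  · obtain ⟨K, hK, hcover⟩ := hcc
    exact ⟨_, isCompact_setOf_apply_zero_mem hK, fun v => hcover (v.1 0)⟩

theorem stmt8 {X : Type*} [MetricSpace X] [ProperSpace X]
    (hgc : ∀ x : X, ∃ v : GeodSpace X, v.1 0 = x)
    {Γ : Type*} [Group Γ] [MulAction Γ X] [IsIsometricSMul Γ X]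
    (hpd : ∀ K : Set X, IsCompact K → {γ : Γ | (K ∩ γ • K).Nonempty}.Finite)
    (hcc : ∃ K : Set X, IsCompact K ∧ ∀ x : X, ∃ γ : Γ, γ • x ∈ K) :
    ∃ m : MetricSpace (GeodSpace X),
      (∀ v w : GeodSpace X,
        @dist _ m.toPseudoMetricSpace.toDist v w
          = ⨆ t : ℝ, Real.exp (-|t|) * dist (v.1 t) (w.1 t)) ∧
      (∀ (γ : Γ) (v w : GeodSpace X),
        @dist _ m.toPseudoMetricSpace.toDist (actGeod γ v) (actGeod γ w)
          = @dist _ m.toPseudoMetricSpace.toDist v w) ∧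
      (∀ K : Set (GeodSpace X), @IsCompact _ m.toUniformSpace.toTopologicalSpace K →
        {γ : Γ | (K ∩ (actGeod γ '' K)).Nonempty}.Finite) ∧
      (∃ K : Set (GeodSpace X), @IsCompact _ m.toUniformSpace.toTopologicalSpace K ∧
        ∀ v : GeodSpace X, ∃ γ : Γ, actGeod γ v ∈ K) :=
  stmt8_general hpd hcc
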